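/- Let H and K be commutative cancellative monoids and f : P_fin,1(H) → P_fin,1(K) an isomorphism with pullback g. Then for every a ∈ H, the order of a equals the order of g(a); in particular a^n = 1_H if and only if g(a)^n = 1_K. -/
import Mathlib


open scoped Pointwise

def redPow (M : Type*) [Monoid M] [DecidableEq M] : Submonoid (Finset M) where
  carrier := {X | (1 : M) ∈ X}
  one_mem' := by simp
  mul_mem' := by
    intro X Y hX hY
    simpa using Finset.mul_mem_mul hX hY

def pairSet {M : Type*} [Monoid M] [DecidableEq M] (a : M) : redPow M :=
  ⟨{1, a}, by simp [redPow]⟩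

lemma pair_pow {M : Type*} [Monoid M] [DecidableEq M] (a : M) :
    ∀ n, ({1, a} : Finset M) ^ n = (Finset.range (n+1)).image (a ^ ·) := by
  intro n
  induction n with
  | zero => ext x; simp
  | succ n ih =>
    rw [pow_succ, ih]
    ext x
    simp only [Finset.mem_mul, Finset.mem_image, Finset.mem_range, Finset.mem_insert,
      Finset.mem_singleton]
    constructor
    · rintro ⟨y, ⟨i, hi, rfl⟩, z, hz, rfl⟩
      rcases hz with rfl | hz
      · exact ⟨i, by omega, by simp⟩
      · exact ⟨i + 1, by omega, by rw [hz, pow_succ]⟩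
    · rintro ⟨i, hi, rfl⟩
      rcases Nat.lt_succ_iff_lt_or_eq.mp hi with h | rfl
      · exact ⟨a ^ i, ⟨i, h, rfl⟩, 1, Or.inl rfl, mul_one _⟩
      · exact ⟨a ^ n, ⟨n, by omega, rfl⟩, a, Or.inr rfl, (pow_succ a n).symm⟩

lemma pair_pow_eq_iff {M : Type*} [CancelCommMonoid M] [DecidableEq M] (a : M) (n : ℕ) :
    ({1, a} : Finset M) ^ (n + 1) = ({1, a} : Finset M) ^ n ↔
      ∃ m, 0 < m ∧ m ≤ n + 1 ∧ a ^ m = 1 := by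
  rw [pair_pow, pair_pow]
  constructor
  · intro h
    have hmem : a ^ (n + 1) ∈ (Finset.range (n + 1)).image (a ^ ·) := by
      rw [← h]
      exact Finset.mem_image.mpr ⟨n + 1, by simp, rfl⟩
    obtain ⟨i, hi, hia⟩ := Finset.mem_image.mp hmem
    rw [Finset.mem_range] at hi
    refine ⟨n + 1 - i, by omega, by omega, ?_⟩
    have : a ^ i * a ^ (n + 1 - i) = a ^ i * 1 := by
      rw [mul_one, ← pow_add]
      rw [show i + (n + 1 - i) = n + 1 by omega, hia]
    exact mul_left_cancel this
  · rintro ⟨m, hm0, hmn, hm1⟩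
    apply Finset.Subset.antisymm
    · intro x hx
      obtain ⟨i, hi, rfl⟩ := Finset.mem_image.mp hx
      rw [Finset.mem_range] at hi
      rcases Nat.lt_or_ge i (n + 1) with h | h
      · exact Finset.mem_image.mpr ⟨i, Finset.mem_range.mpr h, rfl⟩
      · have hi' : i = n + 1 := by omega
        subst hi'
        refine Finset.mem_image.mpr ⟨n + 1 - m, Finset.mem_range.mpr (by omega), ?_⟩
        have hsplit : a ^ (n + 1) = a ^ (n + 1 - m) * a ^ m := by
          rw [← pow_add]; congr 1; omega
        simp only [hsplit, hm1, mul_one]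
    · exact Finset.image_subset_image (Finset.range_subset_range.mpr (by omega))

lemma orderOf_eq_of_iff {M N : Type*} [Monoid M] [Monoid N] (b : M) (c : N)
    (key : ∀ n, (∃ m, 0 < m ∧ m ≤ n ∧ b ^ m = 1) ↔ (∃ m, 0 < m ∧ m ≤ n ∧ c ^ m = 1)) :
    orderOf b = orderOf c := by
  have hfin : IsOfFinOrder b ↔ IsOfFinOrder c := by
    constructor
    · intro hb
      obtain ⟨m, hm0, _, hm1⟩ := (key (orderOf b)).mp
        ⟨orderOf b, hb.orderOf_pos, le_refl _, pow_orderOf_eq_one b⟩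
      exact isOfFinOrder_iff_pow_eq_one.mpr ⟨m, hm0, hm1⟩
    · intro hc
      obtain ⟨m, hm0, _, hm1⟩ := (key (orderOf c)).mpr
        ⟨orderOf c, hc.orderOf_pos, le_refl _, pow_orderOf_eq_one c⟩
      exact isOfFinOrder_iff_pow_eq_one.mpr ⟨m, hm0, hm1⟩
  by_cases hb : IsOfFinOrder b
  · have hc : IsOfFinOrder c := hfin.mp hb
    apply le_antisymm
    · obtain ⟨m, hm0, hmle, hm1⟩ := (key (orderOf c)).mpr
        ⟨orderOf c, hc.orderOf_pos, le_refl _, pow_orderOf_eq_one c⟩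
      exact le_trans (orderOf_le_of_pow_eq_one hm0 hm1) hmle
    · obtain ⟨m, hm0, hmle, hm1⟩ := (key (orderOf b)).mp
        ⟨orderOf b, hb.orderOf_pos, le_refl _, pow_orderOf_eq_one b⟩
      exact le_trans (orderOf_le_of_pow_eq_one hm0 hm1) hmle
  · have hc : ¬ IsOfFinOrder c := fun h => hb (hfin.mpr h)
    rw [orderOf_eq_zero hb, orderOf_eq_zero hc]

/-- The pullback of an isomorphism of reduced finitary power monoids preserves the
order of every element: `orderOf a = orderOf (g a)`, and `a^n = 1 ↔ g(a)^n = 1`. -/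
theorem stmt2 {H K : Type*} [CancelCommMonoid H] [CancelCommMonoid K]
    [DecidableEq H] [DecidableEq K]
    (f : redPow H ≃* redPow K) (g : H → K)
    (hg : ∀ a : H, f (pairSet a) = pairSet (g a)) :
    ∀ a : H, orderOf a = orderOf (g a) ∧ ∀ n : ℕ, a ^ n = 1 ↔ g a ^ n = 1 := by
  intro a
  have hpow : ∀ k : ℕ, f (pairSet a ^ k) = pairSet (g a) ^ k := by
    intro k
    rw [map_pow, hg]
  have hiff : ∀ n : ℕ, (pairSet a ^ (n + 1) = pairSet a ^ n) ↔
      (pairSet (g a) ^ (n + 1) = pairSet (g a) ^ n) := by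
    intro n
    constructor
    · intro h
      rw [← hpow, ← hpow, h]
    · intro h
      have := f.injective
      apply this
      rw [hpow, hpow, h]
  have hcoe : ∀ (b : H) (k : ℕ),
      ((pairSet b ^ k : redPow H) : Finset H) = ({1, b} : Finset H) ^ k := by
    intro b k
    rw [SubmonoidClass.coe_pow]
    rfl
  have hcoeK : ∀ (b : K) (k : ℕ),
      ((pairSet b ^ k : redPow K) : Finset K) = ({1, b} : Finset K) ^ k := by
    intro b k
    rw [SubmonoidClass.coe_pow]
    rfl
  have key : ∀ n, (∃ m, 0 < m ∧ m ≤ n ∧ a ^ m = 1) ↔ (∃ m, 0 < m ∧ m ≤ n ∧ (g a) ^ m = 1) := by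
    intro n
    cases n with
    | zero => simp only [Nat.le_zero]; constructor <;> (rintro ⟨m, hm, rfl, _⟩; omega)
    | succ n =>
      rw [← pair_pow_eq_iff, ← pair_pow_eq_iff, ← hcoe, ← hcoe, ← hcoeK, ← hcoeK]
      rw [Subtype.ext_iff.symm.eq, Subtype.ext_iff.symm.eq]
      exact hiff n
  have hord : orderOf a = orderOf (g a) := orderOf_eq_of_iff a (g a) key
  refine ⟨hord, fun n => ?_⟩
  rw [← orderOf_dvd_iff_pow_eq_one, ← orderOf_dvd_iff_pow_eq_one, hord]
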